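/- Let (𝒮, 𝒜, P*, r, H) be a finite-horizon MDP with global Q*-gap gap* > 0, let S = |𝒮|, let μ > 0, α ∈ [0,1], and K ≥ 1 be given, and set C = 0.5·S·ln 2 + μ·K^α. For each 0 ≤ h ≤ H−2 and (s,a), let n_h(s,a) ≥ 1 be an integer and P̂_h(·|s,a) a probability mass function on 𝒮 such that: (i) ‖P̂_h(·|s,a) − P*_h(·|s,a)‖₁ ≤ 2·√(C/n_h(s,a)), and (ii) n_h(s,a) > n̄_h := (2·S·ln 2 + 4·μ·K^α)·(2H(H−h−1))²/(gap*)². Define bonuses b_h(s,a) = (H−h−1)·√(C/n_h(s,a)) for 0 ≤ h ≤ H−2 and b_{H−1}(s,a) = 0. Then every deterministic Markov policy that is optimal for the MDP (𝒮, 𝒜, P̂, r + b, H) satisfies π_h(s) ∈ A*_h(s) for all (s,h), i.e., it is optimal for (P*, r). -/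

import Mathlib

/-!
Write `Q̂`, `V̂` for the optimal values of `(P̂, r + b)` and `Q*`, `V*` for those of `(P*, r)`.
Expanding one Bellman step, `Q̂_h - Q*_h = ψ_h + P̂_h (V̂_{h+1} - V*_{h+1})` with one-step error
`ψ_h = b_h + (P̂_h - P*_h) V*_{h+1}`. As `V*_{h+1}` takes values in `[0, H - h - 1]`, centring it
bounds `|(P̂_h - P*_h) V*_{h+1}|` by `(H - h - 1) / 2 · ‖P̂_h - P*_h‖₁ ≤ b_h`, so `0 ≤ ψ_h ≤ 2 b_h`,
and the count threshold makes `b_h ≤ gap* / (4H)`. Backward induction then gives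
`0 ≤ Q̂_h - Q*_h ≤ (H - h) · gap* / (2H) ≤ gap* / 2`. A policy `π` optimal for `(P̂, r + b)` is
greedy for `Q̂`, hence `V*_h - Q*_h(π_h) ≤ V̂_h - Q*_h(π_h) = Q̂_h(π_h) - Q*_h(π_h) ≤ gap* / 2`,
which leaves no room for a suboptimality gap of `gap*`.
-/

/-- A probability mass function on a finite type, as a real-valued function. -/
def IsPMF {S : Type*} [Fintype S] (p : S → ℝ) : Prop :=
  (∀ s, 0 ≤ p s) ∧ ∑ s, p s = 1

/-- ℓ₁ distance between two functions on a finite type. -/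
noncomputable def l1dist {S : Type*} [Fintype S] (p q : S → ℝ) : ℝ :=
  ∑ s, |p s - q s|

/-- Value function of a deterministic Markov policy, by backward recursion on the
number `t` of remaining steps; the value at stage `h` with horizon `H` is
`Vpi P r pol (H - h) h`. -/
noncomputable def Vpi {S A : Type*} [Fintype S]
    (P : ℕ → S → A → S → ℝ) (r : ℕ → S → A → ℝ) (pol : ℕ → S → A) :
    ℕ → ℕ → S → ℝ
  | 0, _, _ => 0
  | t + 1, h, s =>
      r h s (pol h s) + ∑ s' : S, P h s (pol h s) s' * Vpi P r pol t (h + 1) s'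

/-- Action-value function of a deterministic Markov policy in the horizon-`H` MDP. -/
noncomputable def Qpi {S A : Type*} [Fintype S]
    (P : ℕ → S → A → S → ℝ) (r : ℕ → S → A → ℝ) (pol : ℕ → S → A)
    (H h : ℕ) (s : S) (a : A) : ℝ :=
  r h s a + ∑ s' : S, P h s a s' * Vpi P r pol (H - (h + 1)) (h + 1) s'

/-- Optimal value function: supremum over all deterministic Markov policies. -/
noncomputable def Vstar {S A : Type*} [Fintype S]
    (P : ℕ → S → A → S → ℝ) (r : ℕ → S → A → ℝ) (H h : ℕ) (s : S) : ℝ :=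
  ⨆ pol : ℕ → S → A, Vpi P r pol (H - h) h s

/-- Optimal action-value function. -/
noncomputable def Qstar {S A : Type*} [Fintype S]
    (P : ℕ → S → A → S → ℝ) (r : ℕ → S → A → ℝ) (H h : ℕ) (s : S) (a : A) : ℝ :=
  r h s a + ∑ s' : S, P h s a s' * Vstar P r H (h + 1) s'

/-- The set of optimal actions `A*_h(s) = argmax_a Q*_h(s,a)`. -/
def OptActions {S A : Type*} [Fintype S]
    (P : ℕ → S → A → S → ℝ) (r : ℕ → S → A → ℝ) (H h : ℕ) (s : S) : Set A :=
  {a | ∀ a', Qstar P r H h s a' ≤ Qstar P r H h s a}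

open Finset Set

theorem IsPMF.sum_mul_mem_Icc {S : Type*} [Fintype S] {p V : S → ℝ} {c : ℝ} (hp : IsPMF p)
    (hV : ∀ s, V s ∈ Icc 0 c) : ∑ s, p s * V s ∈ Icc 0 c := by
  refine ⟨sum_nonneg fun s _ => mul_nonneg (hp.1 s) (hV s).1, ?_⟩
  calc ∑ s, p s * V s ≤ ∑ s, p s * c :=
        sum_le_sum fun s _ => mul_le_mul_of_nonneg_left (hV s).2 (hp.1 s)
    _ = c := by rw [← sum_mul, hp.2, one_mul]

theorem abs_sum_mul_sub_sum_mul_le {S : Type*} [Fintype S] {p q V : S → ℝ} {M : ℝ}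
    (hpq : ∑ s, p s = ∑ s, q s) (hV : ∀ s, V s ∈ Icc 0 M) :
    |∑ s, p s * V s - ∑ s, q s * V s| ≤ M / 2 * l1dist p q := by
  -- equal total masses let us centre `V` at `M / 2`, where `|V - M / 2| ≤ M / 2`
  have hcentre : ∑ s, p s * V s - ∑ s, q s * V s = ∑ s, (p s - q s) * (V s - M / 2) := by
    simp only [sub_mul, mul_sub, sum_sub_distrib, ← sum_mul, hpq]
    ring
  rw [hcentre, l1dist, mul_sum]
  refine (abs_sum_le_sum_abs _ _).trans (sum_le_sum fun s _ => ?_)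
  have hVc : |V s - M / 2| ≤ M / 2 :=
    abs_le.mpr ⟨by linarith [(hV s).1], by linarith [(hV s).2]⟩
  rw [abs_mul, mul_comm]
  exact mul_le_mul_of_nonneg_right hVc (abs_nonneg _)

theorem add_sum_mul_sub_sum_mul_mem_Icc {S : Type*} [Fintype S] {p q V : S → ℝ} {M β : ℝ}
    (hpq : ∑ s, p s = ∑ s, q s) (hV : ∀ s, V s ∈ Icc 0 M) (hβ : M / 2 * l1dist p q ≤ β) :
    β + ∑ s, p s * V s - ∑ s, q s * V s ∈ Icc 0 (2 * β) := by
  have := abs_le.mp ((abs_sum_mul_sub_sum_mul_le hpq hV).trans hβ)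
  constructor <;> linarith [this.1, this.2]

theorem ciSup_sub_ciSup_mem_Icc {ι : Type*} [Finite ι] [Nonempty ι] {f g : ι → ℝ} {c : ℝ}
    (hfg : ∀ i, g i - f i ∈ Icc 0 c) : (⨆ i, g i) - ⨆ i, f i ∈ Icc 0 c :=
  ⟨sub_nonneg.2 (ciSup_mono (Finite.bddAbove_range g) fun i => by linarith [(hfg i).1]),
    sub_le_iff_le_add.2 (ciSup_le fun i => by
      linarith [(hfg i).2, le_ciSup (Finite.bddAbove_range f) i])⟩

theorem mul_sqrt_div_lt_half {C n L g : ℝ} (hL : 0 < L) (hg : 0 < g) (hn : 0 ≤ n)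
    (hcount : 4 * C * L ^ 2 / g ^ 2 < n) : L * √(C / n) < g / 2 := by
  rcases hn.eq_or_lt with rfl | hn
  · simpa using hg
  have hCn : C / n < (g / (2 * L)) ^ 2 := by
    rw [div_lt_iff₀ (by positivity)] at hcount
    rw [div_lt_iff₀ hn, div_pow, mul_pow, div_mul_eq_mul_div, lt_div_iff₀ (by positivity)]
    nlinarith
  calc L * √(C / n) < L * (g / (2 * L)) :=
        mul_lt_mul_of_pos_left ((Real.sqrt_lt' (by positivity)).2 hCn) hL
    _ = g / 2 := by field_simp

theorem bonus_mem_Icc_of_count_gt {S A : Type*} {H : ℕ} {n : ℕ → S → A → ℕ}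
    {b : ℕ → S → A → ℝ} {C g : ℝ} (hg : 0 < g)
    (hcount : ∀ h, h + 1 < H → ∀ s a,
      4 * C * (2 * H * ((H : ℝ) - h - 1)) ^ 2 / g ^ 2 < n h s a)
    (hb : ∀ h, h + 1 < H → ∀ s a, b h s a = ((H : ℝ) - h - 1) * √(C / n h s a))
    (hblast : ∀ s a, b (H - 1) s a = 0) :
    ∀ h, h < H → ∀ s a, b h s a ∈ Icc 0 (g / (4 * H)) := by
  intro h hh s a
  rcases Nat.lt_or_ge (h + 1) H with hlt | hge
  · have hm : (0 : ℝ) < H - h - 1 := by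
      rw [sub_sub, sub_pos]; exact_mod_cast hlt
    have hH : (0 : ℝ) < H := by linarith [(Nat.cast_nonneg h : (0 : ℝ) ≤ h)]
    have hsqrt := mul_sqrt_div_lt_half (by positivity) hg (Nat.cast_nonneg _) (hcount h hlt s a)
    rw [hb h hlt s a]
    refine ⟨by positivity, ?_⟩
    rw [le_div_iff₀ (by positivity)]
    linarith
  · rw [show h = H - 1 by omega, hblast]
    exact ⟨le_rfl, by positivity⟩

section MDP

variable {S A : Type*} [Fintype S] {H : ℕ} {P P' : ℕ → S → A → S → ℝ} {r r' : ℕ → S → A → ℝ}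

theorem Vstar_eq_zero_of_le {h : ℕ} (hh : H ≤ h) (s : S) : Vstar P r H h s = 0 := by
  simp [Vstar, Nat.sub_eq_zero_of_le hh, Vpi]

theorem Qstar_eq_Vstar_of_Vpi_eq_Vstar {pol : ℕ → S → A}
    (hpol : ∀ h, h < H → ∀ s, Vpi P r pol (H - h) h s = Vstar P r H h s) {h : ℕ} (hh : h < H)
    (s : S) : Qstar P r H h s (pol h s) = Vstar P r H h s := by
  rw [← hpol h hh s, show H - h = H - (h + 1) + 1 by omega, Vpi, Qstar]
  congr 1
  refine sum_congr rfl fun s' _ => ?_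
  rcases Nat.lt_or_ge (h + 1) H with hlt | hge
  · rw [hpol (h + 1) hlt s']
  · rw [Vstar_eq_zero_of_le hge, Nat.sub_eq_zero_of_le hge, Vpi]

theorem Vstar_zero_reward {h : ℕ} (s : S) : Vstar P (fun _ _ _ => 0) H h s = 0 := by
  have hVpi (pol : ℕ → S → A) (t : ℕ) : ∀ h s, Vpi P (fun _ _ _ => 0) pol t h s = 0 := by
    induction t with
    | zero => intro _ _; rfl
    | succ t ih => intro h s; simp [Vpi, ih]
  simp [Vstar, hVpi]

noncomputable def Vopt (P : ℕ → S → A → S → ℝ) (r : ℕ → S → A → ℝ) : ℕ → ℕ → S → ℝ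
  | 0, _, _ => 0
  | t + 1, h, s => ⨆ a, (r h s a + ∑ s', P h s a s' * Vopt P r t (h + 1) s')

theorem Vpi_le_Vopt [Fintype A] (hP : ∀ h, h + 1 < H → ∀ s a s', 0 ≤ P h s a s')
    (pol : ℕ → S → A) (t : ℕ) : ∀ h, h + t ≤ H → ∀ s, Vpi P r pol t h s ≤ Vopt P r t h s := by
  induction t with
  | zero => intro _ _ _; rfl
  | succ t ih =>
    intro h ht s
    have hnext : ∑ s', P h s (pol h s) s' * Vpi P r pol t (h + 1) s'
        ≤ ∑ s', P h s (pol h s) s' * Vopt P r t (h + 1) s' := by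
      rcases t with _ | t
      · simp [Vpi, Vopt]
      · exact sum_le_sum fun s' _ => mul_le_mul_of_nonneg_left
          (ih (h + 1) (by omega) s') (hP h (by omega) _ _ s')
    rw [Vpi, Vopt]
    exact (add_le_add_right hnext _).trans
      (le_ciSup (f := fun a => r h s a + ∑ s', P h s a s' * Vopt P r t (h + 1) s')
        (Finite.bddAbove_range _) (pol h s))

theorem Qstar_sub_Qstar_mem_Icc_of_succ {ε : ℝ} (hP' : ∀ h, h + 1 < H → ∀ s a, IsPMF (P' h s a))
    (hψ : ∀ h, h < H → ∀ s a,
      r' h s a + ∑ s', P' h s a s' * Vstar P r H (h + 1) s' - Qstar P r H h s a ∈ Icc 0 ε)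
    {h : ℕ} (hh : h < H)
    (hV : ∀ s', Vstar P' r' H (h + 1) s' - Vstar P r H (h + 1) s' ∈ Icc 0 (((H : ℝ) - h - 1) * ε))
    (s : S) (a : A) : Qstar P' r' H h s a - Qstar P r H h s a ∈ Icc 0 (((H : ℝ) - h) * ε) := by
  have hsplit : Qstar P' r' H h s a - Qstar P r H h s a =
      (r' h s a + ∑ s', P' h s a s' * Vstar P r H (h + 1) s' - Qstar P r H h s a) +
        ∑ s', P' h s a s' * (Vstar P' r' H (h + 1) s' - Vstar P r H (h + 1) s') := by
    simp only [Qstar, mul_sub, sum_sub_distrib]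
    ring
  have hnext : ∑ s', P' h s a s' * (Vstar P' r' H (h + 1) s' - Vstar P r H (h + 1) s') ∈
      Icc 0 (((H : ℝ) - h - 1) * ε) := by
    rcases Nat.lt_or_ge (h + 1) H with hlt | hge
    · exact (hP' h hlt s a).sum_mul_mem_Icc hV
    · obtain rfl : H = h + 1 := by omega
      simp [Vstar_eq_zero_of_le le_rfl]
  rw [hsplit]
  obtain ⟨hψ0, hψε⟩ := hψ h hh s a
  constructor <;> linarith [hnext.1, hnext.2]

section Optimal

variable [Fintype A] [Nonempty A]

theorem exists_Vpi_eq_Vopt :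
    ∃ pol : ℕ → S → A, ∀ t h, h + t = H → ∀ s, Vpi P r pol t h s = Vopt P r t h s := by
  choose pol hpol using fun h s => Finite.exists_max fun a : A =>
    r h s a + ∑ s', P h s a s' * Vopt P r (H - (h + 1)) (h + 1) s'
  refine ⟨pol, fun t => ?_⟩
  induction t with
  | zero => intro h _ s; rfl
  | succ t ih =>
    intro h ht s
    obtain rfl : t = H - (h + 1) := by omega
    rw [Vpi, Vopt]
    simp only [ih (h + 1) (by omega)]
    exact le_antisymm (le_ciSup (f := fun a => r h s a +
      ∑ s', P h s a s' * Vopt P r (H - (h + 1)) (h + 1) s') (Finite.bddAbove_range _) (pol h s))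
      (ciSup_le (hpol h s))

theorem Vstar_eq_Vopt (hP : ∀ h, h + 1 < H → ∀ s a s', 0 ≤ P h s a s') {h : ℕ} (hh : h ≤ H)
    (s : S) : Vstar P r H h s = Vopt P r (H - h) h s := by
  obtain ⟨pol, hpol⟩ := exists_Vpi_eq_Vopt (P := P) (r := r) (H := H)
  refine le_antisymm (ciSup_le fun pol' => Vpi_le_Vopt hP pol' _ h (by omega) s) ?_
  rw [← hpol _ h (by omega) s]
  exact le_ciSup ⟨_, forall_mem_range.mpr fun pol' => Vpi_le_Vopt hP pol' _ h (by omega) s⟩ pol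

theorem Vstar_eq_iSup_Qstar (hP : ∀ h, h + 1 < H → ∀ s a s', 0 ≤ P h s a s') {h : ℕ}
    (hh : h < H) (s : S) : Vstar P r H h s = ⨆ a, Qstar P r H h s a := by
  rw [Vstar_eq_Vopt hP hh.le, show H - h = H - (h + 1) + 1 by omega, Vopt]
  simp only [Qstar, Vstar_eq_Vopt hP (Nat.succ_le_of_lt hh)]

variable {ε : ℝ}

theorem Vstar_sub_Vstar_mem_Icc (hP : ∀ h, h + 1 < H → ∀ s a s', 0 ≤ P h s a s')
    (hP' : ∀ h, h + 1 < H → ∀ s a, IsPMF (P' h s a))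
    (hψ : ∀ h, h < H → ∀ s a,
      r' h s a + ∑ s', P' h s a s' * Vstar P r H (h + 1) s' - Qstar P r H h s a ∈ Icc 0 ε)
    {h : ℕ} (hh : h ≤ H) (s : S) :
    Vstar P' r' H h s - Vstar P r H h s ∈ Icc 0 (((H : ℝ) - h) * ε) := by
  suffices ∀ k h, h + k = H → ∀ s,
      Vstar P' r' H h s - Vstar P r H h s ∈ Icc 0 (((H : ℝ) - h) * ε) from
    this _ h (Nat.add_sub_cancel' hh) s
  intro k
  induction k with
  | zero =>
    intro h hk s
    obtain rfl : H = h := hk.symm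
    simp [Vstar_eq_zero_of_le le_rfl]
  | succ k ih =>
    intro h hk s
    have hh : h < H := by omega
    rw [Vstar_eq_iSup_Qstar (fun h hh s a => (hP' h hh s a).1) hh, Vstar_eq_iSup_Qstar hP hh]
    refine ciSup_sub_ciSup_mem_Icc fun a => Qstar_sub_Qstar_mem_Icc_of_succ hP' hψ hh
      (fun s' => ?_) s a
    convert ih (h + 1) (by omega) s' using 3
    push_cast
    ring

theorem Qstar_sub_Qstar_mem_Icc (hP : ∀ h, h + 1 < H → ∀ s a s', 0 ≤ P h s a s')
    (hP' : ∀ h, h + 1 < H → ∀ s a, IsPMF (P' h s a))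
    (hψ : ∀ h, h < H → ∀ s a,
      r' h s a + ∑ s', P' h s a s' * Vstar P r H (h + 1) s' - Qstar P r H h s a ∈ Icc 0 ε)
    {h : ℕ} (hh : h < H) (s : S) (a : A) :
    Qstar P' r' H h s a - Qstar P r H h s a ∈ Icc 0 (((H : ℝ) - h) * ε) :=
  Qstar_sub_Qstar_mem_Icc_of_succ hP' hψ hh (fun s' => by
    convert Vstar_sub_Vstar_mem_Icc hP hP' hψ (Nat.succ_le_of_lt hh) s' using 3
    push_cast
    ring) s a

theorem Vstar_mem_Icc (hP : ∀ h, h + 1 < H → ∀ s a, IsPMF (P h s a))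
    (hr : ∀ h, h < H → ∀ s a, r h s a ∈ Icc (0 : ℝ) 1) {h : ℕ} (hh : h ≤ H) (s : S) :
    Vstar P r H h s ∈ Icc 0 ((H : ℝ) - h) := by
  -- `(P, r)` is an `r`-perturbation of the zero-reward MDP `(P, 0)`
  have := Vstar_sub_Vstar_mem_Icc (r := fun _ _ _ => 0) (ε := 1)
    (fun h hh s a => (hP h hh s a).1) hP
    (fun h hh s a => by simpa [Qstar, Vstar_zero_reward] using hr h hh s a) hh s
  simpa [Vstar_zero_reward] using this

theorem reward_add_bonus_sub_Qstar_mem_Icc {b : ℕ → S → A → ℝ} {β : ℝ}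
    (hP : ∀ h, h + 1 < H → ∀ s a, IsPMF (P h s a))
    (hP' : ∀ h, h + 1 < H → ∀ s a, IsPMF (P' h s a))
    (hr : ∀ h, h < H → ∀ s a, r h s a ∈ Icc (0 : ℝ) 1)
    (hbP : ∀ h, h + 1 < H → ∀ s a, ((H : ℝ) - h - 1) / 2 * l1dist (P' h s a) (P h s a) ≤ b h s a)
    (hbβ : ∀ h, h < H → ∀ s a, b h s a ∈ Icc 0 β) :
    ∀ h, h < H → ∀ s a, (r h s a + b h s a) + ∑ s', P' h s a s' * Vstar P r H (h + 1) s' -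
      Qstar P r H h s a ∈ Icc 0 (2 * β) := by
  intro h hh s a
  have hb := hbβ h hh s a
  rcases Nat.lt_or_ge (h + 1) H with hlt | hge
  · have hdev := add_sum_mul_sub_sum_mul_mem_Icc ((hP' h hlt s a).2.trans (hP h hlt s a).2.symm)
      (fun s' => by simpa [sub_add_eq_sub_sub] using Vstar_mem_Icc hP hr hlt.le s')
      (hbP h hlt s a)
    simp only [Qstar, Set.mem_Icc] at hdev hb ⊢
    constructor <;> linarith [hdev.1, hdev.2, hb.2]
  · simp only [Qstar, Vstar_eq_zero_of_le hge, mul_zero, sum_const_zero, add_zero,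
      Set.mem_Icc] at hb ⊢
    constructor <;> linarith [hb.1, hb.2]

end Optimal

end MDP

theorem ucbvi_policy_optimal_of_large_counts_general
    {𝒮 𝒜 : Type*} [Fintype 𝒮] [Fintype 𝒜] [Nonempty 𝒜]
    (H : ℕ)
    (Pstar : ℕ → 𝒮 → 𝒜 → 𝒮 → ℝ) (r : ℕ → 𝒮 → 𝒜 → ℝ)
    (hPstar : ∀ h, h + 1 < H → ∀ s a, IsPMF (Pstar h s a))
    (hr : ∀ h, h < H → ∀ s a, r h s a ∈ Set.Icc (0 : ℝ) 1)
    (gapstar : ℝ) (hgap_pos : 0 < gapstar)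
    (hgap : ∀ h, h < H → ∀ s a, a ∉ OptActions Pstar r H h s →
      gapstar ≤ (⨆ a', Qstar Pstar r H h s a') - Qstar Pstar r H h s a)
    (μ α : ℝ) (K : ℕ)
    (C : ℝ)
    (hC : C = 0.5 * (Fintype.card 𝒮 : ℝ) * Real.log 2 + μ * (K : ℝ) ^ α)
    (n : ℕ → 𝒮 → 𝒜 → ℕ) (Phat : ℕ → 𝒮 → 𝒜 → 𝒮 → ℝ)
    (hPhat : ∀ h, h + 1 < H → ∀ s a, IsPMF (Phat h s a))
    (hconc : ∀ h, h + 1 < H → ∀ s a,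
      l1dist (Phat h s a) (Pstar h s a) ≤ 2 * Real.sqrt (C / (n h s a)))
    (hcount : ∀ h, h + 1 < H → ∀ s a,
      (2 * (Fintype.card 𝒮 : ℝ) * Real.log 2 + 4 * μ * (K : ℝ) ^ α) *
          (2 * H * ((H : ℝ) - h - 1)) ^ 2 / gapstar ^ 2
        < (n h s a : ℝ))
    (b : ℕ → 𝒮 → 𝒜 → ℝ)
    (hb : ∀ h, h + 1 < H → ∀ s a,
      b h s a = ((H : ℝ) - h - 1) * Real.sqrt (C / (n h s a)))
    (hblast : ∀ s a, b (H - 1) s a = 0) :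
    ∀ pol : ℕ → 𝒮 → 𝒜,
      (∀ h, h < H → ∀ s,
        Vpi Phat (fun h s a => r h s a + b h s a) pol (H - h) h s
          = Vstar Phat (fun h s a => r h s a + b h s a) H h s) →
      ∀ h, h < H → ∀ s, pol h s ∈ OptActions Pstar r H h s := by
  intro pol hpol h hh s
  by_contra hsub
  have hbβ := bonus_mem_Icc_of_count_gt hgap_pos
    (fun h hlt s a => by convert hcount h hlt s a using 3; rw [hC]; ring) hb hblast
  have hbP : ∀ h, h + 1 < H → ∀ s a,
      ((H : ℝ) - h - 1) / 2 * l1dist (Phat h s a) (Pstar h s a) ≤ b h s a := by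
    intro h hlt s a
    have hm : (0 : ℝ) ≤ H - h - 1 := by
      rw [sub_sub, sub_nonneg]; exact_mod_cast hlt.le
    calc ((H : ℝ) - h - 1) / 2 * l1dist (Phat h s a) (Pstar h s a)
        ≤ ((H : ℝ) - h - 1) / 2 * (2 * √(C / n h s a)) := by gcongr; exact hconc h hlt s a
      _ = b h s a := by rw [hb h hlt s a]; ring
  have hψ := reward_add_bonus_sub_Qstar_mem_Icc hPstar hPhat hr hbP hbβ
  have hP : ∀ h, h + 1 < H → ∀ s a s', 0 ≤ Pstar h s a s' := fun h hh s a => (hPstar h hh s a).1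
  have hV := Vstar_sub_Vstar_mem_Icc hP hPhat hψ hh.le s
  have hQ := Qstar_sub_Qstar_mem_Icc hP hPhat hψ hh s (pol h s)
  rw [Qstar_eq_Vstar_of_Vpi_eq_Vstar hpol hh] at hQ
  have hgap' := hgap h hh s (pol h s) hsub
  rw [← Vstar_eq_iSup_Qstar hP hh] at hgap'
  have hH : (0 : ℝ) < H := by exact_mod_cast hh.trans_le' (Nat.zero_le h)
  have hhalf : ((H : ℝ) - h) * (2 * (gapstar / (4 * H))) ≤ gapstar / 2 := by
    rw [show ((H : ℝ) - h) * (2 * (gapstar / (4 * H))) = gapstar / 2 - h * gapstar / (2 * H) by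
      field_simp; ring]
    linarith [show 0 ≤ h * gapstar / (2 * H) by positivity]
  linarith [hV.1, hQ.2]

/-- on the good event, sufficiently-visited UCBVI is optimal.
If every visitation count exceeds the threshold `n̄_h` and the empirical kernel is
within the concentration radius of the truth, then every policy optimal for the
bonus-perturbed empirical MDP `(P̂, r + b)` is optimal for the true MDP `(P*, r)`. -/
theorem ucbvi_policy_optimal_of_large_counts
    {𝒮 𝒜 : Type*} [Fintype 𝒮] [Fintype 𝒜] [Nonempty 𝒮] [Nonempty 𝒜]
    (H : ℕ) (hH : 1 ≤ H)
    (Pstar : ℕ → 𝒮 → 𝒜 → 𝒮 → ℝ) (r : ℕ → 𝒮 → 𝒜 → ℝ)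
    (hPstar : ∀ h, h + 1 < H → ∀ s a, IsPMF (Pstar h s a))
    (hr : ∀ h, h < H → ∀ s a, r h s a ∈ Set.Icc (0 : ℝ) 1)
    (gapstar : ℝ) (hgap_pos : 0 < gapstar)
    (hgap : ∀ h, h < H → ∀ s a, a ∉ OptActions Pstar r H h s →
      gapstar ≤ (⨆ a', Qstar Pstar r H h s a') - Qstar Pstar r H h s a)
    (μ α : ℝ) (hμ : 0 < μ) (hα : α ∈ Set.Icc (0 : ℝ) 1) (K : ℕ) (hK : 1 ≤ K)
    (C : ℝ)
    (hC : C = 0.5 * (Fintype.card 𝒮 : ℝ) * Real.log 2 + μ * (K : ℝ) ^ α)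
    (n : ℕ → 𝒮 → 𝒜 → ℕ) (Phat : ℕ → 𝒮 → 𝒜 → 𝒮 → ℝ)
    (hn1 : ∀ h, h + 1 < H → ∀ s a, 1 ≤ n h s a)
    (hPhat : ∀ h, h + 1 < H → ∀ s a, IsPMF (Phat h s a))
    (hconc : ∀ h, h + 1 < H → ∀ s a,
      l1dist (Phat h s a) (Pstar h s a) ≤ 2 * Real.sqrt (C / (n h s a)))
    (hcount : ∀ h, h + 1 < H → ∀ s a,
      (2 * (Fintype.card 𝒮 : ℝ) * Real.log 2 + 4 * μ * (K : ℝ) ^ α) *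
          (2 * H * ((H : ℝ) - h - 1)) ^ 2 / gapstar ^ 2
        < (n h s a : ℝ))
    (b : ℕ → 𝒮 → 𝒜 → ℝ)
    (hb : ∀ h, h + 1 < H → ∀ s a,
      b h s a = ((H : ℝ) - h - 1) * Real.sqrt (C / (n h s a)))
    (hblast : ∀ s a, b (H - 1) s a = 0) :
    ∀ pol : ℕ → 𝒮 → 𝒜,
      (∀ h, h < H → ∀ s,
        Vpi Phat (fun h s a => r h s a + b h s a) pol (H - h) h s
          = Vstar Phat (fun h s a => r h s a + b h s a) H h s) →
      ∀ h, h < H → ∀ s, pol h s ∈ OptActions Pstar r H h s :=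
  ucbvi_policy_optimal_of_large_counts_general H Pstar r hPstar hr gapstar hgap_pos hgap μ α K C hC
    n Phat hPhat hconc hcount b hb hblast
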